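/- arXiv:math/0602663 — 3 statements merged into one kernel-verified Lean document; each statement's English description precedes it below -/
import Mathlib

section
/- Let f satisfy hypothesis (⋆) with parameters H, c, s, let a be a filter of order K ≥ 1 with K < H, and let u ≥ 1 be an integer. Then ∫_ℝ ξ^{2K} f(ξ) dξ < ∞ and N^{2K} ∫_ℝ |P_a(e^{−iuξ/N})|² f(ξ) dξ → u^{2K} (P_a^{(K)}(1)/K!)² ∫_ℝ ξ^{2K} f(ξ) dξ as N → ∞. (The left-hand integral equals the expected generalized quadratic variation E(V_{N,a^u}) of a centered Gaussian process with stationary increments and spectral density f.) -/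
open MeasureTheory Filter Complex

noncomputable section

/-- The polynomial `P_a(x) = ∑_{k=0}^l a_k x^k` associated to a filter. -/
def Pa (a : ℕ → ℝ) (l : ℕ) (x : ℂ) : ℂ :=
  ∑ k ∈ Finset.range (l + 1), (a k : ℂ) * x ^ k

/-- `a` is a filter of order `K ≥ 1` and length `l+1`. -/
def IsFilter (a : ℕ → ℝ) (l K : ℕ) : Prop :=
  1 ≤ K ∧ K ≤ l ∧
    (∀ r < K, ∑ k ∈ Finset.range (l + 1), a k * (k : ℝ) ^ r = 0) ∧
    ∑ k ∈ Finset.range (l + 1), a k * (k : ℝ) ^ K ≠ 0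

/-- Hypothesis (⋆) on the spectral density `f` with parameters `H, c, s`. -/
structure SpecHyp (f : ℝ → ℝ) (H c s : ℝ) : Prop where
  even : ∀ ξ : ℝ, f (-ξ) = f ξ
  nonneg : ∀ ξ : ℝ, 0 ≤ f ξ
  meas : Measurable f
  integrable : Integrable (fun ξ : ℝ => min 1 (ξ ^ 2) * f ξ)
  Hpos : 0 < H
  cpos : 0 < c
  spos : 0 < s
  bound : ∃ C₀ > (0 : ℝ), ∃ A > (0 : ℝ), ∀ ξ : ℝ, A ≤ |ξ| →
    |f ξ - c * |ξ| ^ (-2 * H - 1)| ≤ C₀ * |ξ| ^ (-2 * H - 1 - s)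

/-- `P_a^{(K)}(1) = ∑_{k=0}^l a_k k(k-1)⋯(k-K+1)`. -/
def derPaK (a : ℕ → ℝ) (l K : ℕ) : ℝ :=
  ∑ k ∈ Finset.range (l + 1), a k * (Nat.descFactorial k K : ℝ)

/-! The moment conditions make `1` a root of `P_a` of multiplicity exactly `K`,
so `P_a(z) = (z - 1)^K q(z)` with `q(1) = P_a^{(K)}(1) / K!`. Hence
`N^{2K} |P_a(e^{-iuξ/N})|² = |N (e^{-iuξ/N} - 1)|^{2K} |q(e^{-iuξ/N})|²`, which tends to
`(uξ)^{2K} q(1)²` and, since `|e^{iy} - 1| ≤ |y|`, is bounded by `(u|ξ|)^{2K} sup_{|z| = 1} |q|²`.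
Dominated convergence concludes; the dominating function `ξ^{2K} f(ξ)` is integrable because
`ξ^{2K} ≲ min(1, ξ²)` near the origin and `ξ^{2K} f(ξ) = O(|ξ|^{2K-2H-1})` at infinity, with
`2K - 2H - 1 < -1`. -/

open Polynomial

theorem sum_mul_descFactorial_eq_sum_mul_pow {R : Type*} [CommRing R] [IsDomain R]
    (s : Finset ℕ) (a : ℕ → R) {r : ℕ} (h : ∀ j < r, ∑ k ∈ s, a k * (k : R) ^ j = 0) :
    ∑ k ∈ s, a k * (Nat.descFactorial k r : R) = ∑ k ∈ s, a k * (k : R) ^ r := by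
  have hdeg : (descPochhammer R r).natDegree = r := descPochhammer_natDegree R r
  have hexpand (k : ℕ) : (Nat.descFactorial k r : R)
      = ∑ j ∈ Finset.range (r + 1), (descPochhammer R r).coeff j * (k : R) ^ j := by
    rw [← descPochhammer_eval_eq_descFactorial, eval_eq_sum_range, hdeg]
  simp_rw [hexpand, Finset.mul_sum]
  rw [Finset.sum_comm, Finset.sum_range_succ, Finset.sum_eq_zero, zero_add]
  · have hlead : (descPochhammer R r).coeff r = 1 := by
      simpa only [hdeg] using (monic_descPochhammer R r).coeff_natDegree
    simp only [hlead, one_mul]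
  · intro j hj
    simp_rw [mul_left_comm (a _), ← Finset.mul_sum, h j (Finset.mem_range.mp hj), mul_zero]

def filterPoly (a : ℕ → ℝ) (l : ℕ) : ℂ[X] :=
  ∑ k ∈ Finset.range (l + 1), C (a k : ℂ) * X ^ k

theorem eval_filterPoly (a : ℕ → ℝ) (l : ℕ) (z : ℂ) : (filterPoly a l).eval z = Pa a l z := by
  simp [filterPoly, Pa, eval_finsetSum]

theorem eval_one_iterate_derivative_filterPoly (a : ℕ → ℝ) (l r : ℕ) :
    (derivative^[r] (filterPoly a l)).eval 1
      = ((∑ k ∈ Finset.range (l + 1), a k * (Nat.descFactorial k r : ℝ) : ℝ) : ℂ) := by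
  simp [filterPoly, iterate_derivative_sum, iterate_derivative_C_mul,
    iterate_derivative_X_pow_eq_C_mul, eval_finsetSum]

theorem IsFilter.rootMultiplicity_filterPoly {a : ℕ → ℝ} {l K : ℕ} (ha : IsFilter a l K) :
    (filterPoly a l).rootMultiplicity 1 = K := by
  obtain ⟨hK, -, hvan, hK_ne⟩ := ha
  have hderK : (derivative^[K] (filterPoly a l)).eval 1 ≠ 0 := by
    rw [eval_one_iterate_derivative_filterPoly, sum_mul_descFactorial_eq_sum_mul_pow _ _ hvan]
    exact_mod_cast hK_ne
  have hp : filterPoly a l ≠ 0 := by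
    rintro hp
    simp [hp] at hderK
  refine le_antisymm (not_lt.mp fun hlt => hderK ?_) ?_
  · exact isRoot_iterate_derivative_of_lt_rootMultiplicity hlt
  · suffices K - 1 < (filterPoly a l).rootMultiplicity 1 by omega
    refine lt_rootMultiplicity_of_isRoot_iterate_derivative hp fun j hj => ?_
    have hjK : j < K := by omega
    rw [IsRoot, eval_one_iterate_derivative_filterPoly,
      sum_mul_descFactorial_eq_sum_mul_pow _ _ fun i hi => hvan i (hi.trans hjK), hvan j hjK,
      Complex.ofReal_zero]

theorem IsFilter.exists_Pa_eq_mul {a : ℕ → ℝ} {l K : ℕ} (ha : IsFilter a l K) :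
    ∃ q : ℂ[X], (∀ z, Pa a l z = (z - 1) ^ K * q.eval z) ∧
      q.eval 1 = ((derPaK a l K / (Nat.factorial K : ℝ) : ℝ) : ℂ) := by
  have hmult := ha.rootMultiplicity_filterPoly
  refine ⟨filterPoly a l /ₘ (X - C 1) ^ K, fun z => ?_, ?_⟩
  · conv_lhs => rw [← eval_filterPoly, ← pow_mul_divByMonic_rootMultiplicity_eq (filterPoly a l) 1]
    simp [hmult]
  · have := (filterPoly a l).eval_iterate_derivative_rootMultiplicity (t := 1)
    rw [hmult, eval_one_iterate_derivative_filterPoly, nsmul_eq_mul] at this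
    rw [Complex.ofReal_div, derPaK, this, Complex.ofReal_natCast,
      mul_div_cancel_left₀ _ (Nat.cast_ne_zero.mpr K.factorial_ne_zero)]

theorem tendsto_natCast_mul_cexp_div_sub_one (z : ℂ) :
    Tendsto (fun N : ℕ => (N : ℂ) * (Complex.exp (z / N) - 1)) atTop (nhds z) := by
  rw [tendsto_iff_norm_sub_tendsto_zero]
  refine squeeze_zero' (Eventually.of_forall fun _ => norm_nonneg _) ?_
    (tendsto_const_div_atTop_nhds_zero_nat (‖z‖ ^ 2))
  filter_upwards [eventually_ge_atTop ⌈‖z‖⌉₊, eventually_ge_atTop 1] with N hzN hN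
  have hN0 : (0 : ℝ) < N := by exact_mod_cast hN
  have hsmall : ‖z / N‖ ≤ 1 := by
    rw [norm_div, Complex.norm_natCast]
    exact div_le_one_of_le₀ (Nat.ceil_le.mp hzN) hN0.le
  calc ‖(N : ℂ) * (Complex.exp (z / N) - 1) - z‖ = N * ‖Complex.exp (z / N) - 1 - z / N‖ := by
        rw [← Complex.norm_natCast, ← norm_mul, mul_sub _ _ (z / N),
          mul_div_cancel₀ z (by exact_mod_cast hN0.ne')]
    _ ≤ N * ‖z / N‖ ^ 2 := by gcongr; exact Complex.norm_exp_sub_one_sub_id_le hsmall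
    _ = ‖z‖ ^ 2 / N := by
        rw [norm_div, Complex.norm_natCast]
        field_simp

theorem norm_natCast_mul_cexp_neg_I_mul_div_sub_one_le (x : ℝ) (N : ℕ) :
    ‖(N : ℂ) * (Complex.exp (-Complex.I * x / N) - 1)‖ ≤ |x| := by
  rcases N.eq_zero_or_pos with rfl | hN
  · simp
  have hN0 : (0 : ℝ) < N := by exact_mod_cast hN
  have harg : -Complex.I * x / N = Complex.I * ((-x / N : ℝ) : ℂ) := by push_cast; ring
  rw [harg, norm_mul, Complex.norm_natCast]
  calc (N : ℝ) * ‖Complex.exp (Complex.I * ((-x / N : ℝ) : ℂ)) - 1‖ ≤ N * ‖-x / N‖ := by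
        gcongr
        exact Real.norm_exp_I_mul_ofReal_sub_one_le
    _ = |x| := by
        rw [Real.norm_eq_abs, abs_div, abs_neg, Nat.abs_cast]
        field_simp

theorem tendsto_norm_natCast_mul_cexp_div_sub_one_pow_mul_norm_eval_sq (q : ℂ[X]) (z : ℂ)
    (m : ℕ) :
    Tendsto (fun N : ℕ => ‖(N : ℂ) * (Complex.exp (z / N) - 1)‖ ^ m *
        ‖q.eval (Complex.exp (z / N))‖ ^ 2) atTop (nhds (‖z‖ ^ m * ‖q.eval 1‖ ^ 2)) := by
  have hexp : Tendsto (fun N : ℕ => Complex.exp (z / N)) atTop (nhds 1) := by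
    rw [← Complex.exp_zero]
    exact (Complex.continuous_exp.tendsto 0).comp (tendsto_const_div_atTop_nhds_zero_nat z)
  exact ((tendsto_natCast_mul_cexp_div_sub_one z).norm.pow m).mul
    (((q.continuous.tendsto 1).comp hexp).norm.pow 2)

theorem tendsto_pow_mul_integral_norm_sq_cexp_sub_one_pow_mul {f : ℝ → ℝ}
    (hf : AEStronglyMeasurable f) {K : ℕ} (hint : Integrable (fun ξ : ℝ => ξ ^ (2 * K) * f ξ))
    (q : ℂ[X]) (x : ℝ) :
    Tendsto (fun N : ℕ => (N : ℝ) ^ (2 * K) * ∫ ξ : ℝ,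
        ‖(Complex.exp (-Complex.I * x * ξ / N) - 1) ^ K *
          q.eval (Complex.exp (-Complex.I * x * ξ / N))‖ ^ 2 * f ξ)
      atTop (nhds (x ^ (2 * K) * ‖q.eval 1‖ ^ 2 * ∫ ξ : ℝ, ξ ^ (2 * K) * f ξ)) := by
  set w : ℕ → ℝ → ℂ := fun N ξ => Complex.exp (-Complex.I * x * ξ / N)
  set F : ℕ → ℝ → ℝ := fun N ξ => ‖(N : ℂ) * (w N ξ - 1)‖ ^ (2 * K) * ‖q.eval (w N ξ)‖ ^ 2 * f ξ
  have hw_norm (N : ℕ) (ξ : ℝ) : ‖w N ξ‖ = 1 := by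
    simp only [w]
    rw [show -Complex.I * x * ξ / N = ((-(x * ξ / N) : ℝ) : ℂ) * Complex.I by push_cast; ring]
    exact Complex.norm_exp_ofReal_mul_I _
  obtain ⟨M, hM⟩ := (isCompact_sphere (0 : ℂ) 1).exists_bound_of_continuousOn
    q.continuous.continuousOn
  have hF_le (N : ℕ) (ξ : ℝ) : ‖F N ξ‖ ≤ |x| ^ (2 * K) * M ^ 2 * ‖ξ ^ (2 * K) * f ξ‖ := by
    have hmul : ‖(N : ℂ) * (w N ξ - 1)‖ ≤ |x| * |ξ| := by
      rw [← abs_mul]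
      simpa only [w, Complex.ofReal_mul, mul_assoc] using
        norm_natCast_mul_cexp_neg_I_mul_div_sub_one_le (x * ξ) N
    have hq : ‖q.eval (w N ξ)‖ ≤ M := hM _ (by simpa using hw_norm N ξ)
    calc ‖F N ξ‖ = ‖(N : ℂ) * (w N ξ - 1)‖ ^ (2 * K) * ‖q.eval (w N ξ)‖ ^ 2 * |f ξ| := by
          rw [Real.norm_eq_abs, abs_mul, abs_mul, abs_pow, abs_pow, abs_norm, abs_norm]
      _ ≤ (|x| * |ξ|) ^ (2 * K) * M ^ 2 * |f ξ| := by gcongr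
      _ = |x| ^ (2 * K) * M ^ 2 * ‖ξ ^ (2 * K) * f ξ‖ := by
          rw [Real.norm_eq_abs, abs_mul, abs_pow]
          ring
  have hF_lim (ξ : ℝ) : Tendsto (fun N => F N ξ) atTop
      (nhds ((x * ξ) ^ (2 * K) * ‖q.eval 1‖ ^ 2 * f ξ)) := by
    have hlim := (tendsto_norm_natCast_mul_cexp_div_sub_one_pow_mul_norm_eval_sq
      q (-Complex.I * x * ξ) (2 * K)).mul_const (f ξ)
    have hz : ‖-Complex.I * x * ξ‖ ^ (2 * K) = (x * ξ) ^ (2 * K) := by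
      rw [← (even_two_mul K).pow_abs (x * ξ)]
      simp [abs_mul]
    rwa [hz] at hlim
  have hF_meas (N : ℕ) : AEStronglyMeasurable (F N) := by
    refine (Continuous.aestronglyMeasurable ?_).mul hf
    fun_prop
  have hDCT := tendsto_integral_of_dominated_convergence _ hF_meas
    (hint.norm.const_mul (|x| ^ (2 * K) * M ^ 2)) (fun N => ae_of_all _ (hF_le N))
    (ae_of_all _ hF_lim)
  have hF_integral (N : ℕ) : ∫ ξ, F N ξ = (N : ℝ) ^ (2 * K) * ∫ ξ : ℝ,
      ‖(w N ξ - 1) ^ K * q.eval (w N ξ)‖ ^ 2 * f ξ := by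
    rw [← integral_const_mul]
    congr 1 with ξ
    simp only [F, norm_mul, norm_pow, Complex.norm_natCast]
    ring
  have hlim_integral : ∫ ξ : ℝ, (x * ξ) ^ (2 * K) * ‖q.eval 1‖ ^ 2 * f ξ
      = x ^ (2 * K) * ‖q.eval 1‖ ^ 2 * ∫ ξ : ℝ, ξ ^ (2 * K) * f ξ := by
    rw [← integral_const_mul]
    congr 1 with ξ
    ring
  rw [← hlim_integral]
  exact hDCT.congr hF_integral

theorem SpecHyp.exists_le_mul_rpow {f : ℝ → ℝ} {H c s : ℝ} (hf : SpecHyp f H c s) :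
    ∃ B ≥ (1 : ℝ), ∃ C ≥ (0 : ℝ), ∀ ξ, B ≤ |ξ| → f ξ ≤ C * |ξ| ^ (-2 * H - 1) := by
  obtain ⟨C₀, hC₀, A, -, hbound⟩ := hf.bound
  refine ⟨max 1 A, le_max_left _ _, c + C₀, by linarith [hf.cpos], fun ξ hξ => ?_⟩
  have hξ1 : 1 ≤ |ξ| := (le_max_left _ _).trans hξ
  have hrpow : |ξ| ^ (-2 * H - 1 - s) ≤ |ξ| ^ (-2 * H - 1) :=
    Real.rpow_le_rpow_of_exponent_le hξ1 (by linarith [hf.spos])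
  have := (abs_le.mp (hbound ξ ((le_max_right _ _).trans hξ))).2
  nlinarith

theorem pow_two_mul_le_mul_min {B ξ : ℝ} {n : ℕ} (hB : 1 ≤ B) (hn : 1 ≤ n) (hξ : |ξ| ≤ B) :
    ξ ^ (2 * n) ≤ B ^ (2 * n) * min 1 (ξ ^ 2) := by
  rcases le_total |ξ| 1 with hξ1 | hξ1
  · have hsq : ξ ^ 2 ≤ 1 := by nlinarith [sq_abs ξ, abs_nonneg ξ]
    rw [min_eq_right hsq, pow_mul]
    calc (ξ ^ 2) ^ n ≤ ξ ^ 2 := pow_le_of_le_one (sq_nonneg ξ) hsq (by omega)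
      _ ≤ B ^ (2 * n) * ξ ^ 2 := le_mul_of_one_le_left (sq_nonneg ξ) (one_le_pow₀ hB)
  · rw [min_eq_left (by nlinarith [sq_abs ξ]), mul_one, ← (even_two_mul n).pow_abs]
    exact pow_le_pow_left₀ (abs_nonneg ξ) hξ _

theorem rpow_neg_le_two_rpow_mul_one_add_rpow_neg {t r : ℝ} (ht : 1 ≤ t) (hr : 0 ≤ r) :
    t ^ (-r) ≤ 2 ^ r * (1 + t) ^ (-r) := by
  have h2t : (2 * t) ^ (-r) ≤ (1 + t) ^ (-r) :=
    Real.rpow_le_rpow_of_nonpos (by linarith) (by linarith) (by linarith)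
  calc t ^ (-r) = 2 ^ r * (2 * t) ^ (-r) := by
        rw [Real.mul_rpow zero_le_two (by linarith), Real.rpow_neg zero_le_two, ← mul_assoc,
          mul_inv_cancel₀ (by positivity), one_mul]
    _ ≤ 2 ^ r * (1 + t) ^ (-r) := by gcongr

theorem SpecHyp.integrable_pow_mul {f : ℝ → ℝ} {H c s : ℝ} (hf : SpecHyp f H c s) {n : ℕ}
    (hn : 1 ≤ n) (hnH : (n : ℝ) < H) : Integrable (fun ξ : ℝ => ξ ^ (2 * n) * f ξ) := by
  obtain ⟨B, hB, C, hC, hf_le⟩ := hf.exists_le_mul_rpow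
  set r := 2 * H + 1 - 2 * n
  have hr : 1 < r := by linarith
  have hdom : Integrable fun ξ : ℝ => B ^ (2 * n) * (min 1 (ξ ^ 2) * f ξ) +
      C * 2 ^ r * (1 + ‖ξ‖) ^ (-r) :=
    (hf.integrable.const_mul _).add ((integrable_one_add_norm (by simpa using hr)).const_mul _)
  refine hdom.mono' ((measurable_id.pow_const _).mul hf.meas).aestronglyMeasurable
    (ae_of_all _ fun ξ => ?_)
  have hf_nonneg := hf.nonneg ξ
  have hnear_nonneg : 0 ≤ B ^ (2 * n) * (min 1 (ξ ^ 2) * f ξ) := by positivity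
  have hfar_nonneg : 0 ≤ C * 2 ^ r * (1 + ‖ξ‖) ^ (-r) := by positivity
  rw [Real.norm_eq_abs, abs_of_nonneg (mul_nonneg ((even_two_mul n).pow_nonneg ξ) hf_nonneg)]
  rcases le_total |ξ| B with hξ | hξ
  · calc ξ ^ (2 * n) * f ξ ≤ B ^ (2 * n) * min 1 (ξ ^ 2) * f ξ :=
          mul_le_mul_of_nonneg_right (pow_two_mul_le_mul_min hB hn hξ) hf_nonneg
      _ ≤ _ := by rw [mul_assoc]; exact le_add_of_nonneg_right hfar_nonneg
  · have hξ1 : 1 ≤ |ξ| := hB.trans hξ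
    have hξ0 : 0 < |ξ| := by linarith
    calc ξ ^ (2 * n) * f ξ ≤ |ξ| ^ ((2 * n : ℕ) : ℝ) * (C * |ξ| ^ (-2 * H - 1)) := by
          rw [Real.rpow_natCast, (even_two_mul n).pow_abs]
          exact mul_le_mul_of_nonneg_left (hf_le ξ hξ) ((even_two_mul n).pow_nonneg ξ)
      _ = C * |ξ| ^ (-r) := by
          rw [mul_left_comm, ← Real.rpow_add hξ0]
          congr 2
          push_cast
          ring
      _ ≤ C * (2 ^ r * (1 + ‖ξ‖) ^ (-r)) := by
          rw [Real.norm_eq_abs]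
          gcongr
          exact rpow_neg_le_two_rpow_mul_one_add_rpow_neg hξ1 (by linarith)
      _ ≤ _ := by rw [← mul_assoc]; exact le_add_of_nonneg_left hnear_nonneg

theorem statement0_general (f : ℝ → ℝ) (H c s : ℝ) (hf : SpecHyp f H c s)
    (a : ℕ → ℝ) (l K : ℕ) (ha : IsFilter a l K) (hKH : (K : ℝ) < H)
    (u : ℕ) :
    Integrable (fun ξ : ℝ => ξ ^ (2 * K) * f ξ) ∧
    Tendsto
      (fun N : ℕ => (N : ℝ) ^ (2 * K) *
        ∫ ξ : ℝ, ‖Pa a l (Complex.exp (-Complex.I * u * ξ / N))‖ ^ 2 * f ξ)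
      atTop
      (nhds ((u : ℝ) ^ (2 * K) * (derPaK a l K / (Nat.factorial K : ℝ)) ^ 2 *
        ∫ ξ : ℝ, ξ ^ (2 * K) * f ξ)) := by
  obtain ⟨q, hPa, hq⟩ := ha.exists_Pa_eq_mul
  have hint := hf.integrable_pow_mul ha.1 hKH
  refine ⟨hint, ?_⟩
  have hlim := tendsto_pow_mul_integral_norm_sq_cexp_sub_one_pow_mul
    hf.meas.aestronglyMeasurable hint q u
  rw [hq, Complex.norm_real, Real.norm_eq_abs, sq_abs] at hlim
  simpa only [hPa, Complex.ofReal_natCast] using hlim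

theorem statement0 (f : ℝ → ℝ) (H c s : ℝ) (hf : SpecHyp f H c s)
    (a : ℕ → ℝ) (l K : ℕ) (ha : IsFilter a l K) (hKH : (K : ℝ) < H)
    (u : ℕ) (hu : 1 ≤ u) :
    Integrable (fun ξ : ℝ => ξ ^ (2 * K) * f ξ) ∧
    Tendsto
      (fun N : ℕ => (N : ℝ) ^ (2 * K) *
        ∫ ξ : ℝ, ‖Pa a l (Complex.exp (-Complex.I * u * ξ / N))‖ ^ 2 * f ξ)
      atTop
      (nhds ((u : ℝ) ^ (2 * K) * (derPaK a l K / (Nat.factorial K : ℝ)) ^ 2 *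
        ∫ ξ : ℝ, ξ ^ (2 * K) * f ξ)) :=
  statement0_general f H c s hf a l K ha hKH u
end
end

section
/- Let f satisfy hypothesis (⋆) with parameters H, c, s, let a be a filter of order K with K > H, let u, v ≥ 1 be integers, and let p ∈ ℤ be fixed. Then N^{2H} Γ_{N,a}^{u,v}(p) → c ∫_ℝ e^{−ipξ} h_a^{u,v}(ξ) |ξ|^{−2H−1} dξ as N → ∞. -/
open MeasureTheory Filter Complex

noncomputable section

/-- `h_a^{u,v}(ξ) = P_a(e^{-iuξ}) conj(P_a(e^{-ivξ}))`. -/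
def haUV (a : ℕ → ℝ) (l u v : ℕ) (ξ : ℝ) : ℂ :=
  Pa a l (Complex.exp (-Complex.I * u * ξ)) *
    (starRingEnd ℂ) (Pa a l (Complex.exp (-Complex.I * v * ξ)))

/-- `Γ_{N,a}^{u,v}(p) = ∫ e^{-ipξ/N} h_a^{u,v}(ξ/N) f(ξ) dξ` (a real number). -/
def Gam (f : ℝ → ℝ) (a : ℕ → ℝ) (l u v N : ℕ) (p : ℤ) : ℝ :=
  (∫ ξ : ℝ, Complex.exp (-Complex.I * p * ξ / N) * haUV a l u v (ξ / N) * (f ξ : ℂ)).re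

/-- The real number `∫ e^{-ipξ} h_a^{u,v}(ξ) |ξ|^{-2H-1} dξ`. -/
def Iuv (a : ℕ → ℝ) (l u v : ℕ) (H : ℝ) (p : ℤ) : ℝ :=
  (∫ ξ : ℝ, Complex.exp (-Complex.I * p * ξ) * haUV a l u v ξ *
    ((|ξ| ^ (-2 * H - 1) : ℝ) : ℂ)).re

/-!
Substituting `ξ = N η` turns `N^{2H} Γ_{N,a}^{u,v}(p)` into `∫ φ(η) N^{2H+1} f(N η) dη` with
`φ(η) = e^{-ipη} h_a^{u,v}(η)`. The vanishing moments of the filter kill the first `K` Taylor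
coefficients of `P_a(e^{-iη})` at `η = 0`, so `|φ(η)| ≲ min(1, |η|^{2K})`. Beyond the radius `A`
where `f` follows its power law, `N^{2H+1} f(N η)` is dominated by a multiple of `|η|^{-2H-1}` and
tends to `c |η|^{-2H-1}`; since `K > H` the dominated convergence theorem applies. The part
`|ξ| ≤ A` contributes `O(N^{2H-2K})`, because `|φ(ξ/N)| ≲ N^{-2K} |ξ|^{2K}` there and
`min(1, ξ²) f` is integrable.
-/

open Metric Topology

lemma min_one_abs_rpow_le_min_one_sq {γ x y : ℝ} (hγ : 2 ≤ γ) (hxy : |x| ≤ |y|) :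
    min 1 (|x| ^ γ) ≤ min 1 (y ^ 2) := by
  rcases le_total |x| 1 with hx | hx
  · refine min_le_min le_rfl ?_
    calc |x| ^ γ ≤ |x| ^ (2 : ℝ) :=
          Real.rpow_le_rpow_of_exponent_ge' (abs_nonneg x) hx zero_le_two hγ
      _ = |x| ^ 2 := Real.rpow_two _
      _ ≤ |y| ^ 2 := by gcongr
      _ = y ^ 2 := sq_abs y
  · have hy : 1 ≤ y ^ 2 := by nlinarith [sq_abs y, abs_nonneg y]
    simp [min_eq_left hy]

lemma abs_rpow_le_rpow_mul_min_one_sq {γ A x : ℝ} (hγ : 2 ≤ γ) (hA : 1 ≤ A) (hx : |x| ≤ A) :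
    |x| ^ γ ≤ A ^ γ * min 1 (x ^ 2) := by
  rcases le_total |x| 1 with hx1 | hx1
  · have hsq := min_one_abs_rpow_le_min_one_sq (x := x) (y := x) hγ le_rfl
    rw [min_eq_right (Real.rpow_le_one (abs_nonneg x) hx1 (by linarith))] at hsq
    exact hsq.trans (le_mul_of_one_le_left (by positivity) (Real.one_le_rpow hA (by linarith)))
  · have hy : 1 ≤ x ^ 2 := by nlinarith [sq_abs x, abs_nonneg x]
    rw [min_eq_left hy, mul_one]
    exact Real.rpow_le_rpow (abs_nonneg x) hx (by linarith)

lemma rpow_mul_eq_abs_rpow_neg_mul {N η : ℝ} (e x : ℝ) (hN : 0 ≤ N) (hη : η ≠ 0) :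
    N ^ e * x = |η| ^ (-e) * (|N * η| ^ e * x) := by
  have hη' : 0 < |η| := abs_pos.2 hη
  rw [abs_mul, abs_of_nonneg hN, Real.mul_rpow hN hη'.le, Real.rpow_neg hη'.le]
  field_simp

lemma integrable_min_one_abs_rpow_mul_abs_rpow {α β : ℝ} (hαβ : -1 < α + β) (hβ : β < -1) :
    Integrable fun x : ℝ ↦ min 1 (|x| ^ α) * |x| ^ β := by
  set g : ℝ → ℝ := fun x ↦ min 1 (|x| ^ α) * |x| ^ β
  have hg : Measurable g := by fun_prop
  have hIoc : IntegrableOn g (Set.Ioc 0 1) := by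
    refine Integrable.mono' ((intervalIntegrable_iff_integrableOn_Ioc_of_le zero_le_one).1
      (intervalIntegral.intervalIntegrable_rpow' hαβ)) hg.aestronglyMeasurable
      ((ae_restrict_iff' measurableSet_Ioc).2 (ae_of_all _ fun x hx ↦ ?_))
    rw [Real.norm_of_nonneg (by positivity), Real.rpow_add hx.1]
    simp only [g, abs_of_pos hx.1]
    exact mul_le_mul_of_nonneg_right (min_le_right _ _) (Real.rpow_nonneg hx.1.le β)
  have hIoi : IntegrableOn g (Set.Ioi 1) := by
    refine Integrable.mono' ((integrableOn_Ioi_rpow_iff zero_lt_one).2 hβ)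
      hg.aestronglyMeasurable ((ae_restrict_iff' measurableSet_Ioi).2 (ae_of_all _ fun x hx ↦ ?_))
    rw [Real.norm_of_nonneg (by positivity)]
    simp only [g, abs_of_pos (zero_lt_one.trans (Set.mem_Ioi.1 hx))]
    exact mul_le_of_le_one_left (Real.rpow_nonneg (by linarith [Set.mem_Ioi.1 hx]) β)
      (min_le_left _ _)
  have hpos : Integrable ((Set.Ioi 0).indicator g) := by
    rw [integrable_indicator_iff measurableSet_Ioi, ← Set.Ioc_union_Ioi_eq_Ioi zero_le_one]
    exact hIoc.union hIoi
  refine (hpos.add hpos.comp_neg).congr (ae_of_all _ fun x ↦ ?_)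
  rcases lt_trichotomy x 0 with hx | rfl | hx
  · simp [Set.indicator, hx, hx.not_gt, g, abs_neg]
  · simp [g, Real.zero_rpow (by linarith : β ≠ 0)]
  · simp [Set.indicator, hx, hx.not_gt, g]

lemma tendsto_natCast_mul_cocompact {η : ℝ} (hη : η ≠ 0) :
    Tendsto (fun N : ℕ ↦ (N : ℝ) * η) atTop (cocompact ℝ) :=
  tendsto_cocompact_of_tendsto_dist_comp_atTop 0 <| by
    simpa [abs_mul] using tendsto_natCast_atTop_atTop.atTop_mul_const (abs_pos.2 hη)

def rescaledTail (f : ℝ → ℝ) (H A : ℝ) (N : ℕ) (η : ℝ) : ℝ :=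
  (N : ℝ) ^ (2 * H + 1) * (closedBall 0 A)ᶜ.indicator f (N * η)

lemma rescaledTail_eq {f : ℝ → ℝ} {H A : ℝ} (hA : 0 ≤ A) {N : ℕ} {η : ℝ}
    (hNη : (N : ℝ) * η ∉ closedBall 0 A) :
    rescaledTail f H A N η = |η| ^ (-2 * H - 1) * (|N * η| ^ (2 * H + 1) * f (N * η)) := by
  have hη : η ≠ 0 := by rintro rfl; simp [hA] at hNη
  rw [rescaledTail, Set.indicator_of_mem hNη, show -2 * H - 1 = -(2 * H + 1) by ring]
  exact rpow_mul_eq_abs_rpow_neg_mul _ _ N.cast_nonneg hη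

lemma rescaledTail_nonneg {f : ℝ → ℝ} (hf_nonneg : ∀ ξ, 0 ≤ f ξ) (H A : ℝ) (N : ℕ) (η : ℝ) :
    0 ≤ rescaledTail f H A N η :=
  mul_nonneg (by positivity) (Set.indicator_nonneg (fun ξ _ ↦ hf_nonneg ξ) _)

lemma rescaledTail_le {f : ℝ → ℝ} {H A C : ℝ} (hA : 0 ≤ A) (hC : 0 ≤ C)
    (hfA : ∀ ξ ∉ closedBall 0 A, |ξ| ^ (2 * H + 1) * f ξ ≤ C) (N : ℕ) (η : ℝ) :
    rescaledTail f H A N η ≤ C * |η| ^ (-2 * H - 1) := by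
  by_cases hNη : (N : ℝ) * η ∈ closedBall 0 A
  · simp only [rescaledTail, Set.indicator_of_notMem (Set.notMem_compl_iff.2 hNη), mul_zero]
    positivity
  · rw [rescaledTail_eq hA hNη, mul_comm C]
    exact mul_le_mul_of_nonneg_left (hfA _ hNη) (by positivity)

lemma tendsto_rescaledTail {f : ℝ → ℝ} {H A c : ℝ} (hA : 0 ≤ A)
    (hf_tail : Tendsto (fun ξ ↦ |ξ| ^ (2 * H + 1) * f ξ) (cocompact ℝ) (𝓝 c))
    {η : ℝ} (hη : η ≠ 0) :
    Tendsto (fun N ↦ rescaledTail f H A N η) atTop (𝓝 (c * |η| ^ (-2 * H - 1))) := by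
  have hN := tendsto_natCast_mul_cocompact hη
  rw [mul_comm]
  refine ((hf_tail.comp hN).const_mul _).congr' ?_
  filter_upwards [hN.eventually (isCompact_closedBall (0 : ℝ) A).compl_mem_cocompact]
    with N hNη using (rescaledTail_eq hA hNη).symm

section

variable {E : Type*} [NormedAddCommGroup E]

lemma nonneg_of_norm_le_mul_min_one {φ : ℝ → E} {γ M : ℝ}
    (hφ : ∀ x, ‖φ x‖ ≤ M * min 1 (|x| ^ γ)) : 0 ≤ M := by
  simpa using (norm_nonneg _).trans (hφ 1)

lemma norm_comp_div_le_of_abs_le {φ : ℝ → E} {γ M A N ξ : ℝ}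
    (hφ : ∀ x, ‖φ x‖ ≤ M * min 1 (|x| ^ γ)) (hγ : 2 ≤ γ) (hA : 1 ≤ A) (hN : 0 < N)
    (hξ : |ξ| ≤ A) : ‖φ (ξ / N)‖ ≤ M * A ^ γ * N ^ (-γ) * min 1 (ξ ^ 2) := by
  have hM := nonneg_of_norm_le_mul_min_one hφ
  calc ‖φ (ξ / N)‖ ≤ M * |ξ / N| ^ γ :=
        (hφ _).trans (mul_le_mul_of_nonneg_left (min_le_right _ _) hM)
    _ = M * |ξ| ^ γ * N ^ (-γ) := by
        rw [abs_div, abs_of_pos hN, Real.div_rpow (abs_nonneg _) hN.le, Real.rpow_neg hN.le]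
        ring
    _ ≤ M * (A ^ γ * min 1 (ξ ^ 2)) * N ^ (-γ) := by
        gcongr
        exact abs_rpow_le_rpow_mul_min_one_sq hγ hA hξ
    _ = M * A ^ γ * N ^ (-γ) * min 1 (ξ ^ 2) := by ring

variable [NormedSpace ℝ E]

lemma integral_smul_comp_div (g : ℝ → ℝ) (φ : ℝ → E) {a : ℝ} (ha : 0 < a) :
    ∫ ξ, g ξ • φ (ξ / a) = a • ∫ η, g (a * η) • φ η := by
  have h := Measure.integral_comp_mul_left (fun ξ ↦ g ξ • φ (ξ / a)) a
  simp only [mul_div_cancel_left₀ _ ha.ne'] at h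
  rw [h, abs_of_pos (inv_pos.2 ha), smul_smul, mul_inv_cancel₀ ha.ne', one_smul]

lemma integrable_smul_comp_div {f : ℝ → ℝ} {φ : ℝ → E} {γ M a : ℝ}
    (hf_nonneg : ∀ ξ, 0 ≤ f ξ) (hf_meas : Measurable f)
    (hf_int : Integrable fun ξ ↦ min 1 (ξ ^ 2) * f ξ)
    (hφ_meas : StronglyMeasurable φ) (hφ : ∀ x, ‖φ x‖ ≤ M * min 1 (|x| ^ γ)) (hγ : 2 ≤ γ)
    (ha : 1 ≤ a) : Integrable fun ξ ↦ f ξ • φ (ξ / a) := by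
  have hM := nonneg_of_norm_le_mul_min_one hφ
  refine (hf_int.const_mul M).mono' (hf_meas.aestronglyMeasurable.smul
    (hφ_meas.comp_measurable (measurable_id.div_const a)).aestronglyMeasurable)
    (ae_of_all _ fun ξ ↦ ?_)
  have hξ : |ξ / a| ≤ |ξ| := by
    rw [abs_div, abs_of_pos (by linarith : 0 < a)]
    exact div_le_self (abs_nonneg ξ) ha
  rw [norm_smul, Real.norm_of_nonneg (hf_nonneg ξ)]
  calc f ξ * ‖φ (ξ / a)‖ ≤ f ξ * (M * min 1 (ξ ^ 2)) :=
        mul_le_mul_of_nonneg_left ((hφ _).trans (mul_le_mul_of_nonneg_left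
          (min_one_abs_rpow_le_min_one_sq hγ hξ) hM)) (hf_nonneg ξ)
    _ = M * (min 1 (ξ ^ 2) * f ξ) := by ring

lemma tendsto_rpow_smul_setIntegral_closedBall {f : ℝ → ℝ} {φ : ℝ → E} {H γ M A : ℝ}
    (hf_nonneg : ∀ ξ, 0 ≤ f ξ) (hf_int : Integrable fun ξ ↦ min 1 (ξ ^ 2) * f ξ)
    (hφ : ∀ x, ‖φ x‖ ≤ M * min 1 (|x| ^ γ)) (hγ : 2 ≤ γ) (hHγ : 2 * H < γ) (hA : 1 ≤ A) :
    Tendsto (fun N : ℕ ↦ (N : ℝ) ^ (2 * H) • ∫ ξ in closedBall 0 A, f ξ • φ (ξ / N))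
      atTop (𝓝 0) := by
  set W := ∫ ξ, min 1 (ξ ^ 2) * f ξ
  have hlim : Tendsto (fun N : ℕ ↦ M * A ^ γ * W * (N : ℝ) ^ (2 * H - γ)) atTop (𝓝 0) := by
    simpa using ((tendsto_rpow_neg_atTop (by linarith : 0 < γ - 2 * H)).comp
      tendsto_natCast_atTop_atTop).const_mul (M * A ^ γ * W)
  refine squeeze_zero_norm' ?_ hlim
  filter_upwards [eventually_gt_atTop 0] with N hN
  have hN : (0 : ℝ) < N := Nat.cast_pos.2 hN
  set D := M * A ^ γ * (N : ℝ) ^ (-γ)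
  have hD : 0 ≤ D := by have := nonneg_of_norm_le_mul_min_one hφ; positivity
  have hint : Integrable fun ξ ↦ D * (min 1 (ξ ^ 2) * f ξ) := hf_int.const_mul D
  have hpt : ∀ ξ ∈ closedBall (0 : ℝ) A, ‖f ξ • φ (ξ / N)‖ ≤ D * (min 1 (ξ ^ 2) * f ξ) := by
    intro ξ hξ
    rw [norm_smul, Real.norm_of_nonneg (hf_nonneg ξ), mul_comm]
    calc ‖φ (ξ / N)‖ * f ξ ≤ D * min 1 (ξ ^ 2) * f ξ := mul_le_mul_of_nonneg_right
          (norm_comp_div_le_of_abs_le hφ hγ hA hN (by simpa using hξ)) (hf_nonneg ξ)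
      _ = D * (min 1 (ξ ^ 2) * f ξ) := mul_assoc _ _ _
  calc ‖(N : ℝ) ^ (2 * H) • ∫ ξ in closedBall 0 A, f ξ • φ (ξ / N)‖
      ≤ (N : ℝ) ^ (2 * H) * ∫ ξ in closedBall 0 A, D * (min 1 (ξ ^ 2) * f ξ) := by
        rw [norm_smul, Real.norm_of_nonneg (by positivity)]
        gcongr
        exact norm_integral_le_of_norm_le hint.integrableOn
          ((ae_restrict_iff' measurableSet_closedBall).2 (ae_of_all _ hpt))
    _ ≤ (N : ℝ) ^ (2 * H) * (D * W) := by
        gcongr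
        rw [← integral_const_mul]
        exact setIntegral_le_integral hint (ae_of_all _ fun ξ ↦ mul_nonneg hD
          (mul_nonneg (le_min zero_le_one (sq_nonneg ξ)) (hf_nonneg ξ)))
    _ = M * A ^ γ * W * (N : ℝ) ^ (2 * H - γ) := by
        rw [sub_eq_add_neg, Real.rpow_add hN]
        ring

lemma rpow_smul_setIntegral_compl_closedBall_eq (f : ℝ → ℝ) (φ : ℝ → E) (H A : ℝ) {N : ℕ}
    (hN : 0 < N) :
    (N : ℝ) ^ (2 * H) • ∫ ξ in (closedBall 0 A)ᶜ, f ξ • φ (ξ / N)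
      = ∫ η, rescaledTail f H A N η • φ η := by
  have hN' : (0 : ℝ) < N := Nat.cast_pos.2 hN
  rw [← integral_indicator measurableSet_closedBall.compl]
  simp_rw [Set.indicator_smul_apply_left]
  rw [integral_smul_comp_div _ φ hN', smul_smul, ← Real.rpow_add_one hN'.ne', ← integral_smul]
  simp_rw [smul_smul]
  rfl

lemma tendsto_rpow_smul_setIntegral_compl_closedBall {f : ℝ → ℝ} {φ : ℝ → E} {H c γ M A C : ℝ}
    (hf_nonneg : ∀ ξ, 0 ≤ f ξ) (hf_meas : Measurable f)
    (hf_tail : Tendsto (fun ξ ↦ |ξ| ^ (2 * H + 1) * f ξ) (cocompact ℝ) (𝓝 c))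
    (hA : 0 ≤ A) (hC : 0 ≤ C) (hfA : ∀ ξ ∉ closedBall 0 A, |ξ| ^ (2 * H + 1) * f ξ ≤ C)
    (hφ_meas : StronglyMeasurable φ) (hφ : ∀ x, ‖φ x‖ ≤ M * min 1 (|x| ^ γ))
    (hH : 0 < H) (hHγ : 2 * H < γ) :
    Tendsto (fun N : ℕ ↦ (N : ℝ) ^ (2 * H) • ∫ ξ in (closedBall 0 A)ᶜ, f ξ • φ (ξ / N))
      atTop (𝓝 (c • ∫ η, |η| ^ (-2 * H - 1) • φ η)) := by
  have hlimit : c • ∫ η, |η| ^ (-2 * H - 1) • φ η = ∫ η, (c * |η| ^ (-2 * H - 1)) • φ η := by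
    rw [← integral_smul]
    simp_rw [smul_smul]
  rw [hlimit]
  refine Tendsto.congr' ((eventually_gt_atTop 0).mono fun N hN ↦
    (rpow_smul_setIntegral_compl_closedBall_eq f φ H A hN).symm) ?_
  refine tendsto_integral_filter_of_dominated_convergence
    (fun η ↦ C * M * (min 1 (|η| ^ γ) * |η| ^ (-2 * H - 1))) (Eventually.of_forall fun N ↦ ?_)
    (Eventually.of_forall fun N ↦ ae_of_all _ fun η ↦ ?_)
    ((integrable_min_one_abs_rpow_mul_abs_rpow (by linarith) (by linarith)).const_mul _)
    (by filter_upwards [Measure.ae_ne volume 0] with η hη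
        using (tendsto_rescaledTail hA hf_tail hη).smul_const (φ η))
  · exact ((((hf_meas.indicator measurableSet_closedBall.compl).comp
      (measurable_const_mul _)).const_mul _).aestronglyMeasurable.smul
      hφ_meas.aestronglyMeasurable)
  · rw [norm_smul, Real.norm_of_nonneg (rescaledTail_nonneg hf_nonneg H A N η)]
    calc rescaledTail f H A N η * ‖φ η‖ ≤ (C * |η| ^ (-2 * H - 1)) * (M * min 1 (|η| ^ γ)) :=
          mul_le_mul (rescaledTail_le hA hC hfA N η) (hφ η) (norm_nonneg _) (by positivity)
      _ = _ := by ring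

theorem tendsto_rpow_smul_integral_comp_div {f : ℝ → ℝ} {φ : ℝ → E} {H c γ M : ℝ}
    (hf_nonneg : ∀ ξ, 0 ≤ f ξ) (hf_meas : Measurable f)
    (hf_int : Integrable fun ξ ↦ min 1 (ξ ^ 2) * f ξ)
    (hf_tail : Tendsto (fun ξ ↦ |ξ| ^ (2 * H + 1) * f ξ) (cocompact ℝ) (𝓝 c))
    (hφ_meas : StronglyMeasurable φ) (hφ : ∀ x, ‖φ x‖ ≤ M * min 1 (|x| ^ γ))
    (hH : 0 < H) (hHγ : 2 * H < γ) (hγ : 2 ≤ γ) :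
    Tendsto (fun N : ℕ ↦ (N : ℝ) ^ (2 * H) • ∫ ξ, f ξ • φ (ξ / N)) atTop
      (𝓝 (c • ∫ η, |η| ^ (-2 * H - 1) • φ η)) := by
  obtain ⟨A, hA, hfA⟩ : ∃ A : ℝ, 1 ≤ A ∧
      ∀ ξ ∉ closedBall 0 A, |ξ| ^ (2 * H + 1) * f ξ ≤ |c| + 1 := by
    have h := hf_tail.eventually_le_const (by linarith [le_abs_self c] : c < |c| + 1)
    rw [← cobounded_eq_cocompact, (hasBasis_cobounded_compl_closedBall 0).eventually_iff] at h
    obtain ⟨r, -, hr⟩ := h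
    exact ⟨max r 1, le_max_right _ _, fun ξ hξ ↦
      hr (fun h ↦ hξ (closedBall_subset_closedBall (le_max_left _ _) h))⟩
  have h := (tendsto_rpow_smul_setIntegral_closedBall hf_nonneg hf_int hφ hγ hHγ hA).add
    (tendsto_rpow_smul_setIntegral_compl_closedBall hf_nonneg hf_meas hf_tail (by linarith)
      (by positivity) hfA hφ_meas hφ hH hHγ)
  rw [zero_add] at h
  refine h.congr' ((eventually_ge_atTop 1).mono fun N hN ↦ ?_)
  rw [← smul_add, integral_add_compl measurableSet_closedBall
    (integrable_smul_comp_div hf_nonneg hf_meas hf_int hφ_meas hφ hγ (by exact_mod_cast hN))]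

end

lemma SpecHyp.tendsto_abs_rpow_mul {f : ℝ → ℝ} {H c s : ℝ} (hf : SpecHyp f H c s) :
    Tendsto (fun ξ ↦ |ξ| ^ (2 * H + 1) * f ξ) (cocompact ℝ) (𝓝 c) := by
  obtain ⟨C₀, -, A, hA, hbound⟩ := hf.bound
  have hnorm : Tendsto (fun ξ : ℝ ↦ ‖ξ‖) (cocompact ℝ) atTop := tendsto_norm_cocompact_atTop
  have hdecay : Tendsto (fun ξ : ℝ ↦ C₀ * |ξ| ^ (-s)) (cocompact ℝ) (𝓝 0) := by
    simpa using ((tendsto_rpow_neg_atTop hf.spos).comp hnorm).const_mul C₀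
  rw [tendsto_iff_norm_sub_tendsto_zero]
  refine squeeze_zero_norm' ?_ hdecay
  filter_upwards [hnorm.eventually_ge_atTop A] with ξ hξ
  rw [Real.norm_eq_abs] at hξ
  have hξ0 : 0 < |ξ| := hA.trans_le hξ
  have hfactor : |ξ| ^ (2 * H + 1) * f ξ - c
      = |ξ| ^ (2 * H + 1) * (f ξ - c * |ξ| ^ (-2 * H - 1)) := by
    rw [mul_sub, mul_left_comm, ← Real.rpow_add hξ0, show 2 * H + 1 + (-2 * H - 1) = 0 by ring,
      Real.rpow_zero, mul_one]
  calc ‖‖|ξ| ^ (2 * H + 1) * f ξ - c‖‖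
      = |ξ| ^ (2 * H + 1) * |f ξ - c * |ξ| ^ (-2 * H - 1)| := by
        rw [norm_norm, Real.norm_eq_abs, hfactor, abs_mul,
          abs_of_pos (Real.rpow_pos_of_pos hξ0 _)]
    _ ≤ |ξ| ^ (2 * H + 1) * (C₀ * |ξ| ^ (-2 * H - 1 - s)) := by gcongr; exact hbound ξ hξ
    _ = C₀ * |ξ| ^ (-s) := by
        rw [mul_left_comm, ← Real.rpow_add hξ0]
        ring_nf

lemma norm_Pa_le_of_norm_le_one (a : ℕ → ℝ) (l : ℕ) {x : ℂ} (hx : ‖x‖ ≤ 1) :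
    ‖Pa a l x‖ ≤ ∑ k ∈ Finset.range (l + 1), |a k| := by
  refine (norm_sum_le _ _).trans (Finset.sum_le_sum fun k _ ↦ ?_)
  rw [norm_mul, norm_pow, Complex.norm_real, Real.norm_eq_abs]
  exact mul_le_of_le_one_right (abs_nonneg _) (pow_le_one₀ (norm_nonneg _) hx)

lemma Pa_exp_eq_sum_sub_taylor {a : ℕ → ℝ} {l K : ℕ}
    (hmom : ∀ r < K, ∑ k ∈ Finset.range (l + 1), a k * (k : ℝ) ^ r = 0) (z : ℂ) :
    Pa a l (cexp z) = ∑ k ∈ Finset.range (l + 1), (a k : ℂ) *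
      (cexp (k * z) - ∑ m ∈ Finset.range K, (k * z) ^ m / m.factorial) := by
  have htaylor : ∑ k ∈ Finset.range (l + 1), (a k : ℂ) *
      ∑ m ∈ Finset.range K, ((k : ℂ) * z) ^ m / m.factorial = 0 := by
    simp_rw [Finset.mul_sum]
    rw [Finset.sum_comm]
    refine Finset.sum_eq_zero fun m hm ↦ ?_
    have h := congrArg (fun t : ℝ ↦ (t : ℂ) * (z ^ m / m.factorial))
      (hmom m (Finset.mem_range.1 hm))
    simp only [Complex.ofReal_zero, zero_mul, Complex.ofReal_sum, Complex.ofReal_mul,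
      Complex.ofReal_pow, Complex.ofReal_natCast, Finset.sum_mul] at h
    refine (Finset.sum_congr rfl fun k _ ↦ ?_).trans h
    ring
  simp_rw [mul_sub, Finset.sum_sub_distrib, htaylor, sub_zero, Complex.exp_nat_mul]
  rfl

lemma exists_norm_Pa_exp_le {a : ℕ → ℝ} {l K : ℕ}
    (hmom : ∀ r < K, ∑ k ∈ Finset.range (l + 1), a k * (k : ℝ) ^ r = 0) :
    ∃ C, ∀ z : ℂ, z.re = 0 → ‖Pa a l (cexp z)‖ ≤ C * ‖z‖ ^ K := by
  set C₁ := ∑ k ∈ Finset.range (l + 1), |a k| * ((k : ℝ) ^ K * Real.exp k)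
  set C₂ := ∑ k ∈ Finset.range (l + 1), |a k|
  have hC₁ : 0 ≤ C₁ := Finset.sum_nonneg fun k _ ↦ by positivity
  have hC₂ : 0 ≤ C₂ := Finset.sum_nonneg fun k _ ↦ abs_nonneg _
  refine ⟨C₁ + C₂, fun z hz ↦ ?_⟩
  rcases le_total ‖z‖ 1 with hz1 | hz1
  · have hsmall : ‖Pa a l (cexp z)‖ ≤ C₁ * ‖z‖ ^ K := by
      rw [Pa_exp_eq_sum_sub_taylor hmom, Finset.sum_mul]
      refine (norm_sum_le _ _).trans (Finset.sum_le_sum fun k _ ↦ ?_)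
      rw [norm_mul, Complex.norm_real, Real.norm_eq_abs, mul_assoc]
      refine mul_le_mul_of_nonneg_left ?_ (abs_nonneg _)
      have hkz : ‖(k : ℂ) * z‖ ≤ k := by
        rw [norm_mul, Complex.norm_natCast]
        exact mul_le_of_le_one_right k.cast_nonneg hz1
      calc _ ≤ ‖(k : ℂ) * z‖ ^ K * Real.exp ‖(k : ℂ) * z‖ :=
            Complex.norm_exp_sub_sum_le_norm_mul_exp _ _
        _ ≤ (k * ‖z‖) ^ K * Real.exp k := by
            rw [norm_mul, Complex.norm_natCast] at hkz ⊢
            gcongr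
        _ = (k : ℝ) ^ K * Real.exp k * ‖z‖ ^ K := by ring
    exact hsmall.trans (by gcongr; linarith)
  · have hunit : ‖cexp z‖ = 1 := by rw [Complex.norm_exp, hz, Real.exp_zero]
    calc ‖Pa a l (cexp z)‖ ≤ C₂ := norm_Pa_le_of_norm_le_one a l hunit.le
      _ ≤ C₂ * ‖z‖ ^ K := le_mul_of_one_le_right hC₂ (one_le_pow₀ hz1)
      _ ≤ (C₁ + C₂) * ‖z‖ ^ K := by gcongr; linarith

lemma exists_norm_haUV_le {a : ℕ → ℝ} {l K : ℕ}
    (hmom : ∀ r < K, ∑ k ∈ Finset.range (l + 1), a k * (k : ℝ) ^ r = 0) (u v : ℕ) :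
    ∃ M, ∀ η, ‖haUV a l u v η‖ ≤ M * min 1 (|η| ^ ((2 * K : ℕ) : ℝ)) := by
  obtain ⟨C, hC⟩ := exists_norm_Pa_exp_le hmom
  set B := ∑ k ∈ Finset.range (l + 1), |a k|
  have hB : 0 ≤ B := Finset.sum_nonneg fun k _ ↦ abs_nonneg _
  set M := max (B * B) (C * u ^ K * (C * v ^ K))
  have hM : 0 ≤ M := (mul_nonneg hB hB).trans (le_max_left _ _)
  refine ⟨M, fun η ↦ ?_⟩
  have hre : ∀ w : ℕ, (-I * w * η).re = 0 := fun w ↦ by simp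
  have hnorm : ∀ w : ℕ, ‖-I * w * η‖ = w * |η| := fun w ↦ by simp
  have hunit : ∀ w : ℕ, ‖cexp (-I * w * η)‖ ≤ 1 := fun w ↦ by
    rw [Complex.norm_exp, hre, Real.exp_zero]
  rw [haUV, norm_mul, Complex.norm_conj, Real.rpow_natCast]
  rcases le_total (|η| ^ (2 * K)) 1 with hη | hη
  · rw [min_eq_right hη]
    calc _ ≤ C * ‖-I * u * η‖ ^ K * (C * ‖-I * v * η‖ ^ K) :=
          mul_le_mul (hC _ (hre u)) (hC _ (hre v)) (norm_nonneg _)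
            ((norm_nonneg _).trans (hC _ (hre u)))
      _ = C * u ^ K * (C * v ^ K) * |η| ^ (2 * K) := by rw [hnorm, hnorm]; ring
      _ ≤ M * |η| ^ (2 * K) := by gcongr; exact le_max_right _ _
  · rw [min_eq_left hη, mul_one]
    exact (mul_le_mul (norm_Pa_le_of_norm_le_one a l (hunit u))
      (norm_Pa_le_of_norm_le_one a l (hunit v)) (norm_nonneg _) hB).trans (le_max_left _ _)

theorem statement6_general (f : ℝ → ℝ) (H c s : ℝ) (hf : SpecHyp f H c s)
    (a : ℕ → ℝ) (l K : ℕ) (ha : IsFilter a l K) (hKH : H < (K : ℝ))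
    (u v : ℕ) (p : ℤ) :
    Tendsto (fun N : ℕ => (N : ℝ) ^ (2 * H) * Gam f a l u v N p) atTop
      (nhds (c * Iuv a l u v H p)) := by
  obtain ⟨hK, -, hmom, -⟩ := ha
  obtain ⟨M, hM⟩ := exists_norm_haUV_le hmom u v
  set φ : ℝ → ℂ := fun η ↦ cexp (-I * p * η) * haUV a l u v η
  have hφ : ∀ η, ‖φ η‖ ≤ M * min 1 (|η| ^ ((2 * K : ℕ) : ℝ)) := fun η ↦ by
    simpa [φ, Complex.norm_exp] using hM η
  have hφ_cont : Continuous φ := by simp only [φ, haUV, Pa]; fun_prop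
  have h := tendsto_rpow_smul_integral_comp_div hf.nonneg hf.meas hf.integrable
    hf.tendsto_abs_rpow_mul hφ_cont.stronglyMeasurable hφ hf.Hpos
    (by push_cast; linarith) (by norm_cast; omega)
  convert (Complex.continuous_re.tendsto _).comp h using 2 with N
  · simp only [Function.comp_apply, Complex.smul_re, smul_eq_mul, Gam]
    congr 2
    refine integral_congr_ae (ae_of_all _ fun ξ ↦ ?_)
    simp only [φ, Complex.real_smul, Complex.ofReal_div, Complex.ofReal_natCast]
    rw [mul_div_assoc]
    ring
  · simp only [Complex.smul_re, smul_eq_mul, Iuv]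
    congr 2
    refine integral_congr_ae (ae_of_all _ fun η ↦ ?_)
    simp only [φ, Complex.real_smul]
    ring

theorem statement6 (f : ℝ → ℝ) (H c s : ℝ) (hf : SpecHyp f H c s)
    (a : ℕ → ℝ) (l K : ℕ) (ha : IsFilter a l K) (hKH : H < (K : ℝ))
    (u v : ℕ) (hu : 1 ≤ u) (hv : 1 ≤ v) (p : ℤ) :
    Tendsto (fun N : ℕ => (N : ℝ) ^ (2 * H) * Gam f a l u v N p) atTop
      (nhds (c * Iuv a l u v H p)) :=
  statement6_general f H c s hf a l K ha hKH u v p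
end
end

section
/- Let a be a filter of order K ≥ 1 and let u ≥ 1 be an integer. Then there is a constant C > 0 such that for all ξ ∈ ℝ, the function h_a^{u,u}(ξ) = |P_a(e^{−iuξ})|² satisfies |h_a^{u,u}(ξ)| ≤ C min(1, ξ^{2K}) and |(d/dξ) h_a^{u,u}(ξ)| ≤ C min(1, |ξ|^{2K−1}). -/
open MeasureTheory Filter Complex

noncomputable section

/-- `h_a^{u,u}(ξ) = |P_a(e^{-iuξ})|²`, a real-valued function. -/
def haUU (a : ℕ → ℝ) (l u : ℕ) (ξ : ℝ) : ℝ :=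
  ‖Pa a l (Complex.exp (-Complex.I * u * ξ))‖ ^ 2

/-!
The moment conditions say that the Taylor coefficients `∑ₖ aₖ C(k, j)` of `P_a` at `1` vanish
for `j < K` (through the falling factorials they are combinations of moments of order `≤ j`),
so `‖P_a z‖ ≤ M ‖z - 1‖ ^ K` on the closed unit disc, while `‖e^{-iuξ} - 1‖ ≤ (u + 2) min 1 |ξ|`.
For the derivative, `h' = 2 Re (conj (P_a w) · (-iu) · (z P_a')(w))`, and `z P_a'` is the
polynomial of `(k aₖ)ₖ`, whose moments of order `< K - 1` vanish, so the same estimate applies.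
-/

open Finset

theorem sum_mul_eval_eq_zero_of_natDegree_lt {R : Type*} [CommRing R] {b : ℕ → R} {n K : ℕ}
    (hb : ∀ r < K, ∑ k ∈ range n, b k * (k : R) ^ r = 0) {p : Polynomial R}
    (hp : p.natDegree < K) :
    ∑ k ∈ range n, b k * p.eval (k : R) = 0 := by
  simp_rw [Polynomial.eval_eq_sum_range, mul_sum]
  rw [sum_comm]
  refine sum_eq_zero fun i hi => ?_
  simp_rw [mul_left_comm (b _), ← mul_sum]
  rw [hb i ((mem_range.mp hi).trans_le hp), mul_zero]

theorem sum_mul_choose_eq_zero {R : Type*} [Field R] [CharZero R] {b : ℕ → R} {n K : ℕ}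
    (hb : ∀ r < K, ∑ k ∈ range n, b k * (k : R) ^ r = 0) {j : ℕ} (hj : j < K) :
    ∑ k ∈ range n, b k * (k.choose j : R) = 0 := by
  have h := sum_mul_eval_eq_zero_of_natDegree_lt hb
    (p := descPochhammer R j) (by rw [descPochhammer_natDegree]; exact hj)
  simp_rw [descPochhammer_eval_eq_descFactorial, Nat.descFactorial_eq_factorial_mul_choose,
    Nat.cast_mul, mul_left_comm (b _), ← mul_sum] at h
  exact (mul_eq_zero.mp h).resolve_left (Nat.cast_ne_zero.mpr j.factorial_ne_zero)

theorem sum_mul_pow_eq_sum_mul_sub_one_pow {R : Type*} [CommRing R] (b : ℕ → R) (n : ℕ) (x : R) :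
    ∑ k ∈ range n, b k * x ^ k =
      ∑ j ∈ range n, (∑ k ∈ range n, b k * k.choose j) * (x - 1) ^ j := by
  have hbinom : ∀ k ∈ range n, x ^ k = ∑ j ∈ range n, (x - 1) ^ j * k.choose j := by
    intro k hk
    rw [← sum_subset (range_subset_range.mpr (mem_range.mp hk) : range (k + 1) ⊆ range n)]
    · simpa using (add_pow (x - 1) 1 k)
    · intro j _ hj
      simp [Nat.choose_eq_zero_of_lt (by simpa using hj : k < j)]
  simp_rw [sum_mul]
  rw [sum_comm]
  refine sum_congr rfl fun k hk => ?_
  rw [hbinom k hk, mul_sum]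
  exact sum_congr rfl fun j _ => by ring

theorem norm_sum_mul_pow_le {𝕜 : Type*} [NormedField 𝕜] {c : ℕ → 𝕜} {n K : ℕ}
    (hc : ∀ j < K, c j = 0) {ρ : ℝ} {y : 𝕜} (hy : ‖y‖ ≤ ρ) :
    ‖∑ j ∈ range n, c j * y ^ j‖ ≤ (∑ j ∈ range n, ‖c j‖ * ρ ^ (j - K)) * ‖y‖ ^ K := by
  rw [sum_mul]
  refine (norm_sum_le _ _).trans (sum_le_sum fun j _ => ?_)
  rw [norm_mul, norm_pow]
  rcases lt_or_ge j K with hj | hj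
  · simp [hc j hj]
  · calc ‖c j‖ * ‖y‖ ^ j = ‖c j‖ * ‖y‖ ^ (j - K) * ‖y‖ ^ K := by
          rw [mul_assoc, ← pow_add, Nat.sub_add_cancel hj]
      _ ≤ ‖c j‖ * ρ ^ (j - K) * ‖y‖ ^ K := by gcongr

theorem exists_norm_Pa_le {b : ℕ → ℝ} {l K : ℕ}
    (hb : ∀ r < K, ∑ k ∈ range (l + 1), b k * (k : ℝ) ^ r = 0) :
    ∃ M ≥ 0, ∀ z : ℂ, ‖z‖ ≤ 1 → ‖Pa b l z‖ ≤ M * ‖z - 1‖ ^ K := by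
  set c : ℕ → ℂ := fun j => ∑ k ∈ range (l + 1), (b k : ℂ) * k.choose j
  have hc : ∀ j < K, c j = 0 := fun j =>
    sum_mul_choose_eq_zero fun r hr => by exact_mod_cast hb r hr
  refine ⟨∑ j ∈ range (l + 1), ‖c j‖ * 2 ^ (j - K), by positivity, fun z hz => ?_⟩
  have hz1 : ‖z - 1‖ ≤ 2 := (norm_sub_le _ _).trans (by rw [norm_one]; linarith)
  rw [Pa, sum_mul_pow_eq_sum_mul_sub_one_pow]
  exact norm_sum_mul_pow_le hc hz1

theorem sum_mul_mul_pow_eq_zero {R : Type*} [CommRing R] {b : ℕ → R} {n K : ℕ}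
    (hb : ∀ r < K, ∑ k ∈ range n, b k * (k : R) ^ r = 0) :
    ∀ r < K - 1, ∑ k ∈ range n, b k * k * (k : R) ^ r = 0 := fun r hr => by
  simpa only [mul_assoc, ← pow_succ'] using hb (r + 1) (by omega)

theorem hasDerivAt_Pa_exp (a : ℕ → ℝ) (l : ℕ) (c : ℂ) (t : ℝ) :
    HasDerivAt (fun t : ℝ => Pa a l (exp (c * t)))
      (c * Pa (fun k => a k * k) l (exp (c * t))) t := by
  simp only [Pa, ← Complex.exp_nat_mul, mul_sum]
  refine HasDerivAt.fun_sum fun k _ => ?_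
  have hlin : HasDerivAt (fun s : ℝ => k * (c * s)) (k * c) t := by
    simpa [mul_assoc] using ((hasDerivAt_id t).ofReal_comp).const_mul ((k : ℂ) * c)
  exact (hlin.cexp.const_mul (a k : ℂ)).congr_deriv (by push_cast; ring)

theorem norm_exp_neg_I_mul_sub_one_le (u : ℕ) (ξ : ℝ) :
    ‖exp (-I * u * ξ) - 1‖ ≤ (u + 2) * min 1 |ξ| := by
  have h2 : ‖exp (-I * u * ξ) - 1‖ ≤ 2 :=
    (norm_sub_le _ _).trans (by norm_num [Complex.norm_exp])
  have hθ : ‖exp (-I * u * ξ) - 1‖ ≤ u * |ξ| := by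
    calc _ = ‖exp (I * ↑(-(u * ξ))) - 1‖ := by congr 3; push_cast; ring
      _ ≤ ‖-(u * ξ)‖ := Real.norm_exp_I_mul_ofReal_sub_one_le
      _ = u * |ξ| := by rw [norm_neg, Real.norm_eq_abs, abs_mul, Nat.abs_cast]
  rcases le_total 1 |ξ| with h | h
  · rw [min_eq_left h]; linarith [(Nat.cast_nonneg u : (0 : ℝ) ≤ u)]
  · rw [min_eq_right h]; nlinarith [abs_nonneg ξ]

theorem min_one_abs_pow (x : ℝ) (n : ℕ) : min 1 |x| ^ n = min 1 (|x| ^ n) := by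
  rcases le_total 1 |x| with h | h
  · rw [min_eq_left h, min_eq_left (one_le_pow₀ h), one_pow]
  · rw [min_eq_right h, min_eq_right (pow_le_one₀ (abs_nonneg x) h)]

theorem exists_norm_Pa_exp_le_s7 {b : ℕ → ℝ} {l K : ℕ}
    (hb : ∀ r < K, ∑ k ∈ range (l + 1), b k * (k : ℝ) ^ r = 0) :
    ∃ M ≥ 0, ∀ (u : ℕ) (ξ : ℝ),
      ‖Pa b l (exp (-I * u * ξ))‖ ≤ M * ((u + 2) * min 1 |ξ|) ^ K := by
  obtain ⟨M, hM, hP⟩ := exists_norm_Pa_le hb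
  refine ⟨M, hM, fun u ξ => ?_⟩
  calc _ ≤ M * ‖exp (-I * u * ξ) - 1‖ ^ K := hP _ (by simp [Complex.norm_exp])
    _ ≤ _ := by gcongr; exact norm_exp_neg_I_mul_sub_one_le u ξ

theorem abs_deriv_haUU_le (a : ℕ → ℝ) (l u : ℕ) (ξ : ℝ) :
    |deriv (haUU a l u) ξ| ≤
      2 * u * (‖Pa a l (exp (-I * u * ξ))‖ * ‖Pa (fun k => a k * k) l (exp (-I * u * ξ))‖) := by
  set P := Pa a l (exp (-I * u * ξ))
  set Q := Pa (fun k => a k * k) l (exp (-I * u * ξ))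
  have hd : deriv (haUU a l u) ξ = 2 * inner ℝ P (-I * u * Q) :=
    (hasDerivAt_Pa_exp a l (-I * u) ξ).norm_sq.deriv
  calc |deriv (haUU a l u) ξ| ≤ 2 * (‖P‖ * ‖-I * u * Q‖) := by
        rw [hd, abs_mul, abs_two]
        gcongr
        exact abs_real_inner_le_norm P _
    _ = _ := by simp only [norm_mul, norm_neg, norm_I, Complex.norm_natCast]; ring

theorem statement7_general (a : ℕ → ℝ) (l K : ℕ) (ha : IsFilter a l K)
    (u : ℕ) :
    ∃ C > (0 : ℝ), ∀ ξ : ℝ,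
      |haUU a l u ξ| ≤ C * min 1 (ξ ^ (2 * K)) ∧
      |deriv (haUU a l u) ξ| ≤ C * min 1 (|ξ| ^ (2 * K - 1)) := by
  obtain ⟨hK, -, hmom, -⟩ := ha
  obtain ⟨M, hM, hP⟩ := exists_norm_Pa_exp_le_s7 hmom
  obtain ⟨N, hN, hQ⟩ := exists_norm_Pa_exp_le_s7 (sum_mul_mul_pow_eq_zero hmom)
  set A : ℝ := u + 2
  have hX : 0 ≤ M ^ 2 * A ^ (2 * K) := by positivity
  have hY : 0 ≤ 2 * u * M * N * A ^ (2 * K - 1) := by positivity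
  set C := M ^ 2 * A ^ (2 * K) + 2 * u * M * N * A ^ (2 * K - 1) + 1
  refine ⟨C, by positivity, fun ξ => ?_⟩
  set m := min 1 |ξ|
  constructor
  · calc |haUU a l u ξ| = ‖Pa a l (exp (-I * u * ξ))‖ ^ 2 := abs_of_nonneg (sq_nonneg _)
      _ ≤ (M * (A * m) ^ K) ^ 2 := by gcongr; exact hP u ξ
      _ = M ^ 2 * A ^ (2 * K) * m ^ (2 * K) := by ring_nf
      _ ≤ C * m ^ (2 * K) := by gcongr; linarith
      _ = _ := by rw [min_one_abs_pow, (even_two_mul K).pow_abs]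
  · calc |deriv (haUU a l u) ξ| ≤ 2 * u * ((M * (A * m) ^ K) * (N * (A * m) ^ (K - 1))) :=
          (abs_deriv_haUU_le a l u ξ).trans (by gcongr; exacts [hP u ξ, hQ u ξ])
      _ = 2 * u * M * N * A ^ (2 * K - 1) * m ^ (2 * K - 1) := by
          rw [show 2 * K - 1 = K + (K - 1) by omega]; ring_nf
      _ ≤ C * m ^ (2 * K - 1) := by gcongr; linarith
      _ = _ := by rw [min_one_abs_pow]

theorem statement7 (a : ℕ → ℝ) (l K : ℕ) (ha : IsFilter a l K)
    (u : ℕ) (hu : 1 ≤ u) :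
    ∃ C > (0 : ℝ), ∀ ξ : ℝ,
      |haUU a l u ξ| ≤ C * min 1 (ξ ^ (2 * K)) ∧
      |deriv (haUU a l u) ξ| ≤ C * min 1 (|ξ| ^ (2 * K - 1)) :=
  statement7_general a l K ha u
end
end
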